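/- arXiv:2501.00819 — 2 statements merged into one kernel-verified Lean document; each statement's English description precedes it below -/
import Mathlib

section
/- For a value function v on a finite set F of M features (M ≥ 1), the Shapley values satisfy the efficiency (additivity) property: the sum over all features j ∈ F of φ_j(v) equals v(F) − v(∅). Equivalently, the baseline v(∅) plus the sum of all Shapley values exactly reconstructs the value of the grand coalition, v(F). -/
/-!
Regroup the double sum by coalitions `T`. The value `v T` receives `|T| · (|T|-1)! (M-|T|)! / M!`
from the features `j ∈ T` (with `S = T \ {j}`) and `-(M-|T|) · |T|! (M-|T|-1)! / M!` from the
features `j ∉ T` (with `S = T`). Both equal `|T|! (M-|T|)! / M!`, so everything cancels except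
the positive term at `T = F` and the negative one at `T = ∅`, whose weights are `1`.
-/

open Finset

/-- The Shapley value of feature `j` for a value function `v` on the finite
feature set `F` (with `M = Fintype.card F` features):
`φ_j(v) = Σ_{S ⊆ F \ {j}} (|S|! (M − |S| − 1)! / M!) (v(S ∪ {j}) − v(S))`. -/
noncomputable def shapley {F : Type*} [Fintype F] [DecidableEq F]
    (v : Finset F → ℝ) (j : F) : ℝ :=
  ∑ S ∈ (Finset.univ.erase j).powerset,
    ((Nat.factorial S.card * Nat.factorial (Fintype.card F - S.card - 1) : ℝ) /
        (Nat.factorial (Fintype.card F) : ℝ)) * (v (insert j S) - v S)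

open scoped Nat

noncomputable def shapleyCoeff (M k : ℕ) : ℝ := (k ! * (M - k - 1)! : ℝ) / M !

noncomputable def shapleyWeight (M k : ℕ) : ℝ := (k ! * (M - k)! : ℝ) / M !

lemma shapleyWeight_zero (M : ℕ) : shapleyWeight M 0 = 1 := by
  simp [shapleyWeight, M.factorial_ne_zero]

lemma shapleyWeight_self (M : ℕ) : shapleyWeight M M = 1 := by
  simp [shapleyWeight, M.factorial_ne_zero]

lemma mul_shapleyCoeff_pred {k : ℕ} (M : ℕ) (hk : k ≠ 0) :
    k * shapleyCoeff M (k - 1) = shapleyWeight M k := by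
  rw [shapleyCoeff, shapleyWeight, show M - (k - 1) - 1 = M - k by omega,
    ← Nat.mul_factorial_pred hk]
  push_cast
  ring

lemma sub_mul_shapleyCoeff {M k : ℕ} (hk : k < M) :
    ((M - k : ℕ) : ℝ) * shapleyCoeff M k = shapleyWeight M k := by
  rw [shapleyCoeff, shapleyWeight, ← Nat.mul_factorial_pred (Nat.sub_ne_zero_of_lt hk)]
  push_cast
  ring

section DoubleCounting

variable {F β : Type*} [Fintype F] [DecidableEq F] [AddCommMonoid β]

lemma sum_sum_powerset_erase (f : F → Finset F → β) :
    ∑ j, ∑ S ∈ (univ.erase j).powerset, f j S = ∑ T, ∑ j ∈ Tᶜ, f j T :=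
  sum_comm' fun j T => by simp [subset_erase]

lemma sum_powerset_erase_insert (f : Finset F → Finset F → β) (j : F) :
    ∑ S ∈ (univ.erase j).powerset, f S (insert j S) = ∑ T with j ∈ T, f (T.erase j) T := by
  refine sum_nbij' (insert j) (erase · j) (by simp) (by simp [subset_erase])
    (fun S hS => erase_insert ?_) (fun T hT => insert_erase (by simpa using hT)) fun S hS => ?_
  all_goals simp_all [subset_erase]

lemma sum_sum_powerset_erase_insert (f : F → Finset F → Finset F → β) :
    ∑ j, ∑ S ∈ (univ.erase j).powerset, f j S (insert j S) =
      ∑ T, ∑ j ∈ T, f j (T.erase j) T := by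
  simp_rw [sum_powerset_erase_insert (f _)]
  exact sum_comm' fun j T => by simp

end DoubleCounting

section Efficiency

variable {F : Type*} [Fintype F] [DecidableEq F]

lemma shapley_eq_sum_shapleyCoeff (v : Finset F → ℝ) (j : F) :
    shapley v j = ∑ S ∈ (univ.erase j).powerset,
      shapleyCoeff (Fintype.card F) #S * (v (insert j S) - v S) :=
  rfl

lemma sum_sum_shapleyCoeff_mul_insert (v : Finset F → ℝ) :
    ∑ j, ∑ S ∈ (univ.erase j).powerset, shapleyCoeff (Fintype.card F) #S * v (insert j S) =
      ∑ T ∈ univ.erase ∅, shapleyWeight (Fintype.card F) #T * v T := by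
  rw [sum_sum_powerset_erase_insert fun _ S T => shapleyCoeff _ #S * v T,
    ← sum_erase (a := ∅) _ (by simp)]
  refine sum_congr rfl fun T hT => ?_
  have hT : #T ≠ 0 := card_ne_zero.2 (nonempty_iff_ne_empty.2 (ne_of_mem_erase hT))
  rw [sum_congr rfl fun j hj => by rw [card_erase_of_mem hj], sum_const, nsmul_eq_mul,
    ← mul_assoc, mul_shapleyCoeff_pred _ hT]

lemma sum_sum_shapleyCoeff_mul (v : Finset F → ℝ) :
    ∑ j, ∑ S ∈ (univ.erase j).powerset, shapleyCoeff (Fintype.card F) #S * v S =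
      ∑ T ∈ univ.erase univ, shapleyWeight (Fintype.card F) #T * v T := by
  rw [sum_sum_powerset_erase fun _ S => shapleyCoeff _ #S * v S,
    ← sum_erase (a := univ) _ (by simp)]
  refine sum_congr rfl fun T hT => ?_
  have hT : #T < Fintype.card F := (card_lt_iff_ne_univ T).2 (ne_of_mem_erase hT)
  rw [sum_const, card_compl, nsmul_eq_mul, ← mul_assoc, sub_mul_shapleyCoeff hT]

end Efficiency

theorem shapley_efficiency_general {F : Type*} [Fintype F] [DecidableEq F]
    (v : Finset F → ℝ) :
    ∑ j : F, shapley v j = v Finset.univ - v ∅ := by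
  simp_rw [shapley_eq_sum_shapleyCoeff, mul_sub, sum_sub_distrib, sum_sum_shapleyCoeff_mul_insert,
    sum_sum_shapleyCoeff_mul, sum_erase_eq_sub (mem_univ _), card_empty, card_univ,
    shapleyWeight_zero, shapleyWeight_self]
  ring

/-- Efficiency (additivity) of Shapley values: the sum of all Shapley values
equals `v(F) − v(∅)`, i.e. the baseline `v(∅)` plus the sum of all Shapley
values reconstructs the value of the grand coalition `v(F)`. -/
theorem shapley_efficiency {F : Type*} [Fintype F] [DecidableEq F]
    (hM : 1 ≤ Fintype.card F) (v : Finset F → ℝ) :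
    ∑ j : F, shapley v j = v Finset.univ - v ∅ :=
  shapley_efficiency_general v
end

section
/- Symmetry property of Shapley values: if two distinct features j, l ∈ F are interchangeable with respect to the value function, i.e. v(S ∪ {j}) = v(S ∪ {l}) for every subset S ⊆ F \ {j, l}, then they receive equal Shapley values: φ_j(v) = φ_l(v). This expresses the fair distribution of contributions among features. -/
open Finset

/-- Symmetry property of Shapley values: if two distinct features `j, l` are
interchangeable, i.e. `v(S ∪ {j}) = v(S ∪ {l})` for every coalition
`S ⊆ F \ {j, l}`, then `φ_j(v) = φ_l(v)`. -/
theorem shapley_symmetry {F : Type*} [Fintype F] [DecidableEq F]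
    (v : Finset F → ℝ) (j l : F) (hjl : j ≠ l)
    (hsym : ∀ S ∈ (Finset.univ \ {j, l} : Finset F).powerset,
      v (insert j S) = v (insert l S)) :
    shapley v j = shapley v l := by
  have himg1 : ∀ T : Finset F, j ∈ T → l ∈ T → T.image (Equiv.swap j l) = T := by
    intro T hj hl
    ext a
    simp only [mem_image, Equiv.swap_apply_def]
    constructor
    · rintro ⟨b, hb, rfl⟩; split_ifs with h1 h2 <;> simp_all
    · intro ha; by_cases h1 : a = j
      · exact ⟨l, hl, by simp [h1, hjl.symm]⟩
      · by_cases h2 : a = l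
        · exact ⟨j, hj, by simp [h2]⟩
        · exact ⟨a, ha, by simp [h1, h2]⟩
  have himg2 : ∀ T : Finset F, j ∉ T → l ∉ T → T.image (Equiv.swap j l) = T := by
    intro T hj hl
    ext a
    simp only [mem_image, Equiv.swap_apply_def]
    constructor
    · rintro ⟨b, hb, rfl⟩; split_ifs with h1 h2 <;> simp_all
    · intro ha
      refine ⟨a, ha, ?_⟩
      have h1 : a ≠ j := fun h => hj (h ▸ ha)
      have h2 : a ≠ l := fun h => hl (h ▸ ha)
      simp [h1, h2]
  have himg3 : ∀ T : Finset F, j ∈ T → l ∉ T →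
      T.image (Equiv.swap j l) = insert l (T.erase j) := by
    intro T hj hl
    ext a
    simp only [mem_image, mem_insert, mem_erase]
    constructor
    · rintro ⟨b, hb, rfl⟩
      rcases eq_or_ne b j with rfl | h1
      · simp
      · rcases eq_or_ne b l with rfl | h2
        · exact absurd hb hl
        · simp [Equiv.swap_apply_of_ne_of_ne h1 h2, h1, hb]
    · rintro (rfl | ⟨h1, ha⟩)
      · exact ⟨j, hj, by simp⟩
      · have h2 : a ≠ l := fun h => hl (h ▸ ha)
        exact ⟨a, ha, Equiv.swap_apply_of_ne_of_ne h1 h2⟩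
  have himg4 : ∀ T : Finset F, l ∈ T → j ∉ T →
      T.image (Equiv.swap j l) = insert j (T.erase l) := by
    intro T hl hj
    ext a
    simp only [mem_image, mem_insert, mem_erase]
    constructor
    · rintro ⟨b, hb, rfl⟩
      rcases eq_or_ne b l with rfl | h2
      · simp
      · rcases eq_or_ne b j with rfl | h1
        · exact absurd hb hj
        · simp [Equiv.swap_apply_of_ne_of_ne h1 h2, h2, hb]
    · rintro (rfl | ⟨h2, ha⟩)
      · exact ⟨l, hl, by simp⟩
      · have h1 : a ≠ j := fun h => hj (h ▸ ha)
        exact ⟨a, ha, Equiv.swap_apply_of_ne_of_ne h1 h2⟩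
  have hv : ∀ T : Finset F, v (T.image (Equiv.swap j l)) = v T := by
    intro T
    by_cases hj : j ∈ T <;> by_cases hl : l ∈ T
    · rw [himg1 T hj hl]
    · rw [himg3 T hj hl]
      have hsub : T.erase j ∈ (Finset.univ \ {j, l} : Finset F).powerset := by
        simp only [mem_powerset, subset_iff, mem_sdiff, mem_insert, mem_singleton, mem_erase]
        rintro a ⟨ha1, ha2⟩
        exact ⟨mem_univ a, by rintro (rfl | rfl); exact ha1 rfl; exact hl ha2⟩
      rw [← hsym _ hsub, insert_erase hj]
    · rw [himg4 T hl hj]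
      have hsub : T.erase l ∈ (Finset.univ \ {j, l} : Finset F).powerset := by
        simp only [mem_powerset, subset_iff, mem_sdiff, mem_insert, mem_singleton, mem_erase]
        rintro a ⟨ha1, ha2⟩
        exact ⟨mem_univ a, by rintro (rfl | rfl); exact hj ha2; exact ha1 rfl⟩
      rw [hsym _ hsub, insert_erase hl]
    · rw [himg2 T hj hl]
  unfold shapley
  refine Finset.sum_nbij' (fun S => S.image (Equiv.swap j l))
    (fun S => S.image (Equiv.swap j l)) ?_ ?_ ?_ ?_ ?_
  · intro S hS
    simp only [mem_powerset, subset_iff, mem_erase] at hS ⊢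
    intro a ha
    obtain ⟨b, hb, rfl⟩ := mem_image.mp ha
    refine ⟨fun h => (hS hb).1 ?_, mem_univ _⟩
    have := congrArg (Equiv.swap j l) h
    simpa using this
  · intro S hS
    simp only [mem_powerset, subset_iff, mem_erase] at hS ⊢
    intro a ha
    obtain ⟨b, hb, rfl⟩ := mem_image.mp ha
    refine ⟨fun h => (hS hb).1 ?_, mem_univ _⟩
    have := congrArg (Equiv.swap j l) h
    simpa using this
  · intro S _
    ext a
    simp [Finset.image_image]
  · intro S _
    ext a
    simp [Finset.image_image]
  · intro S hS
    have hc : (S.image (Equiv.swap j l)).card = S.card :=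
      card_image_of_injective _ (Equiv.injective _)
    have h1 : insert l (S.image (Equiv.swap j l)) = (insert j S).image (Equiv.swap j l) := by
      rw [Finset.image_insert, Equiv.swap_apply_left]
    rw [hc, h1, hv, hv]
end
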